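/- arXiv:2001.10174 — 8 statements merged into one kernel-verified Lean document; each statement's English description precedes it below -/
import Mathlib

section
/- Let T_α be the Bellman optimality operator of a finite discounted MDP and let γ := max over all pairs of state-action pairs ((x,a),(y,b)) with a ∈ A x and b ∈ A y of (1 − ∑_z min(p x a z, p y b z)). Assume α ∈ (0,1), γ ∈ (0,1], ε > 0, and S := sp(T_α v⁰ − v⁰) > 0 for the initial vector v⁰ : Fin m → ℝ. Then for every natural number n with n ≥ max{⌈log((1−α)·ε·γ/S) / log(α·γ)⌉, 1}, the value iterates satisfy sp(T_α^n v⁰ − T_α^{n−1} v⁰) ≤ (1−α)·ε/α. (Theorem 1: the value iteration algorithm with span stopping rule terminates within max{⌈log((1−α)εγ/S)/log(αγ)⌉,1} iterations.) -/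
/-!
Under the Bellman operator the span of a difference contracts by the factor `α γ`: at the
states where `T u - T v` attains its maximum and minimum, the maximising actions reduce the
comparison to two transition distributions `p x a`, `p y b`. These share the mass
`∑ z, min (p x a z) (p y b z) ≥ 1 - γ`, so their averages of any `w` differ by at most
`γ * sp w`. Hence `sp (T^[n] v⁰ - T^[n-1] v⁰) ≤ (α γ)^(n-1) S`, and the bound on `n` makes
`(α γ)^n ≤ (1 - α) ε γ / S`.
-/

open Finset

/-- Span seminorm `sp(u) = max_x u(x) - min_x u(x)` on `Fin m → ℝ`. -/
noncomputable def sp {m : ℕ} [NeZero m] (u : Fin m → ℝ) : ℝ :=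
  (univ.sup' univ_nonempty u) - (univ.inf' univ_nonempty u)

/-- Bellman optimality operator of a finite discounted MDP. -/
noncomputable def bellman {m K : ℕ} (A : Fin m → Finset (Fin K))
    (hA : ∀ x, (A x).Nonempty) (r : Fin m → Fin K → ℝ)
    (p : Fin m → Fin K → Fin m → ℝ) (α : ℝ) (v : Fin m → ℝ) : Fin m → ℝ :=
  fun x => (A x).sup' (hA x) (fun a => r x a + α * ∑ y, p x a y * v y)

lemma sp_nonneg {m : ℕ} [NeZero m] (u : Fin m → ℝ) : 0 ≤ sp u :=
  sub_nonneg.2 ((inf'_le _ (mem_univ 0)).trans (le_sup' _ (mem_univ 0)))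

lemma exists_sp_eq {m : ℕ} [NeZero m] (u : Fin m → ℝ) : ∃ x y, sp u = u x - u y := by
  obtain ⟨x, -, hx⟩ := exists_mem_eq_sup' univ_nonempty u
  obtain ⟨y, -, hy⟩ := exists_mem_eq_inf' univ_nonempty u
  exact ⟨x, y, by rw [sp, hx, hy]⟩

lemma sum_mul_sub_sum_mul_le_sp {m : ℕ} [NeZero m] {p q : Fin m → ℝ}
    (hp : ∑ z, p z = 1) (hq : ∑ z, q z = 1) (w : Fin m → ℝ) :
    ∑ z, p z * w z - ∑ z, q z * w z ≤ (1 - ∑ z, min (p z) (q z)) * sp w := by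
  have hp' : ∑ z, (p z - min (p z) (q z)) = 1 - ∑ z, min (p z) (q z) := by
    rw [sum_sub_distrib, hp]
  have hq' : ∑ z, (q z - min (p z) (q z)) = 1 - ∑ z, min (p z) (q z) := by
    rw [sum_sub_distrib, hq]
  have hupper : ∑ z, (p z - min (p z) (q z)) * w z ≤
      (1 - ∑ z, min (p z) (q z)) * univ.sup' univ_nonempty w := by
    rw [← hp', sum_mul]
    exact sum_le_sum fun z _ =>
      mul_le_mul_of_nonneg_left (le_sup' w (mem_univ z)) (sub_nonneg.2 (min_le_left _ _))
  have hlower : (1 - ∑ z, min (p z) (q z)) * univ.inf' univ_nonempty w ≤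
      ∑ z, (q z - min (p z) (q z)) * w z := by
    rw [← hq', sum_mul]
    exact sum_le_sum fun z _ =>
      mul_le_mul_of_nonneg_left (inf'_le w (mem_univ z)) (sub_nonneg.2 (min_le_right _ _))
  have hsplit : ∑ z, p z * w z - ∑ z, q z * w z =
      ∑ z, (p z - min (p z) (q z)) * w z - ∑ z, (q z - min (p z) (q z)) * w z := by
    simp only [sub_mul, sum_sub_distrib]
    ring
  rw [hsplit, sp, mul_sub]
  linarith

section Bellman

variable {m K : ℕ} (A : Fin m → Finset (Fin K)) (hA : ∀ x, (A x).Nonempty)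
  (r : Fin m → Fin K → ℝ) (p : Fin m → Fin K → Fin m → ℝ) (α : ℝ)

lemma exists_bellman_sub_le (u v : Fin m → ℝ) (x : Fin m) :
    ∃ a ∈ A x, bellman A hA r p α u x - bellman A hA r p α v x ≤
      α * ∑ z, p x a z * (u - v) z := by
  obtain ⟨a, ha, hu⟩ := exists_mem_eq_sup' (hA x) fun a => r x a + α * ∑ z, p x a z * u z
  have hu' : bellman A hA r p α u x = r x a + α * ∑ z, p x a z * u z := hu
  have hv : r x a + α * ∑ z, p x a z * v z ≤ bellman A hA r p α v x :=
    le_sup' (fun a => r x a + α * ∑ z, p x a z * v z) ha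
  refine ⟨a, ha, ?_⟩
  simp only [Pi.sub_apply, mul_sub, sum_sub_distrib]
  linarith

lemma sp_bellman_sub_le [NeZero m] (hp1 : ∀ x a, a ∈ A x → ∑ y, p x a y = 1) {γ : ℝ}
    (hα : 0 ≤ α)
    (hγ : ∀ x y a b, a ∈ A x → b ∈ A y → 1 - ∑ z, min (p x a z) (p y b z) ≤ γ)
    (u v : Fin m → ℝ) :
    sp (bellman A hA r p α u - bellman A hA r p α v) ≤ α * γ * sp (u - v) := by
  obtain ⟨x, y, hxy⟩ := exists_sp_eq (bellman A hA r p α u - bellman A hA r p α v)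
  obtain ⟨a, ha, hx⟩ := exists_bellman_sub_le A hA r p α u v x
  obtain ⟨b, hb, hy⟩ := exists_bellman_sub_le A hA r p α v u y
  have hvu : ∑ z, p y b z * (v - u) z = -∑ z, p y b z * (u - v) z := by
    simp only [Pi.sub_apply, mul_sub, sum_sub_distrib]
    ring
  rw [hvu] at hy
  calc sp (bellman A hA r p α u - bellman A hA r p α v)
      ≤ α * (∑ z, p x a z * (u - v) z - ∑ z, p y b z * (u - v) z) := by
        rw [hxy]
        simp only [Pi.sub_apply] at hx hy ⊢
        linarith
    _ ≤ α * ((1 - ∑ z, min (p x a z) (p y b z)) * sp (u - v)) :=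
        mul_le_mul_of_nonneg_left (sum_mul_sub_sum_mul_le_sp (hp1 x a ha) (hp1 y b hb) _) hα
    _ ≤ α * (γ * sp (u - v)) := by
        gcongr
        exacts [sp_nonneg _, hγ x y a b ha hb]
    _ = α * γ * sp (u - v) := by ring

end Bellman

lemma sp_iterate_succ_sub_le {m : ℕ} [NeZero m] {T : (Fin m → ℝ) → Fin m → ℝ} {c : ℝ}
    (hc : 0 ≤ c) (hT : ∀ u v, sp (T u - T v) ≤ c * sp (u - v)) (v : Fin m → ℝ) (k : ℕ) :
    sp (T^[k + 1] v - T^[k] v) ≤ c ^ k * sp (T v - v) := by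
  induction k with
  | zero => simp
  | succ k ih =>
    calc sp (T^[k + 2] v - T^[k + 1] v) = sp (T (T^[k + 1] v) - T (T^[k] v)) := by
          rw [Function.iterate_succ_apply', Function.iterate_succ_apply' T k]
      _ ≤ c * sp (T^[k + 1] v - T^[k] v) := hT _ _
      _ ≤ c * (c ^ k * sp (T v - v)) := by gcongr
      _ = c ^ (k + 1) * sp (T v - v) := by ring

lemma pow_le_of_ceil_log_div_log_le {c X : ℝ} (hc0 : 0 < c) (hc1 : c < 1) (hX : 0 < X) {n : ℕ}
    (hn : ⌈Real.log X / Real.log c⌉ ≤ n) : c ^ n ≤ X := by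
  rw [Real.pow_le_iff_le_log hc0 hX, ← div_le_iff_of_neg (Real.log_neg hc0 hc1)]
  exact_mod_cast Int.ceil_le.1 hn

theorem stmt0_general {m K : ℕ} [NeZero m] (A : Fin m → Finset (Fin K))
    (hA : ∀ x, (A x).Nonempty) (r : Fin m → Fin K → ℝ)
    (p : Fin m → Fin K → Fin m → ℝ)
    (hp1 : ∀ x a, a ∈ A x → ∑ y, p x a y = 1)
    (α γ ε : ℝ) (hα0 : 0 < α) (hα1 : α < 1)
    (hγ0 : 0 < γ) (hγ1 : γ ≤ 1) (hε : 0 < ε)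
    (hγdef : IsGreatest {g : ℝ | ∃ x y a b, a ∈ A x ∧ b ∈ A y ∧
        g = 1 - ∑ z, min (p x a z) (p y b z)} γ)
    (v0 : Fin m → ℝ)
    (hS : 0 < sp (bellman A hA r p α v0 - v0))
    (n : ℕ)
    (hn : max ⌈Real.log ((1 - α) * ε * γ / sp (bellman A hA r p α v0 - v0)) /
        Real.log (α * γ)⌉ 1 ≤ (n : ℤ)) :
    sp ((bellman A hA r p α)^[n] v0 - (bellman A hA r p α)^[n - 1] v0) ≤
      (1 - α) * ε / α := by
  set S := sp (bellman A hA r p α v0 - v0)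
  have hc0 : 0 < α * γ := mul_pos hα0 hγ0
  have hc1 : α * γ < 1 := by nlinarith
  have hcontr := sp_bellman_sub_le A hA r p α hp1 hα0.le
    fun x y a b ha hb => hγdef.2 ⟨x, y, a, b, ha, hb, rfl⟩
  obtain ⟨k, rfl⟩ : ∃ k, n = k + 1 :=
    Nat.exists_eq_add_one.2 (by exact_mod_cast (le_max_right _ _).trans hn)
  have hpow : (α * γ) ^ (k + 1) ≤ (1 - α) * ε * γ / S := by
    have h1α : 0 < 1 - α := by linarith
    exact pow_le_of_ceil_log_div_log_le hc0 hc1 (by positivity) ((le_max_left _ _).trans hn)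
  rw [pow_succ, le_div_iff₀ hS] at hpow
  rw [Nat.add_sub_cancel, le_div_iff₀ hα0]
  refine le_of_mul_le_mul_right ?_ hγ0
  calc sp (_ - _) * α * γ = sp (_ - _) * (α * γ) := by ring
    _ ≤ (α * γ) ^ k * S * (α * γ) := by
        gcongr
        exact sp_iterate_succ_sub_le hc0.le hcontr v0 k
    _ ≤ (1 - α) * ε * γ := by linarith

theorem stmt0 {m K : ℕ} [NeZero m] (A : Fin m → Finset (Fin K))
    (hA : ∀ x, (A x).Nonempty) (r : Fin m → Fin K → ℝ)
    (p : Fin m → Fin K → Fin m → ℝ)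
    (hp0 : ∀ x a y, a ∈ A x → 0 ≤ p x a y)
    (hp1 : ∀ x a, a ∈ A x → ∑ y, p x a y = 1)
    (α γ ε : ℝ) (hα0 : 0 < α) (hα1 : α < 1)
    (hγ0 : 0 < γ) (hγ1 : γ ≤ 1) (hε : 0 < ε)
    (hγdef : IsGreatest {g : ℝ | ∃ x y a b, a ∈ A x ∧ b ∈ A y ∧
        g = 1 - ∑ z, min (p x a z) (p y b z)} γ)
    (v0 : Fin m → ℝ)
    (hS : 0 < sp (bellman A hA r p α v0 - v0))
    (n : ℕ)
    (hn : max ⌈Real.log ((1 - α) * ε * γ / sp (bellman A hA r p α v0 - v0)) /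
        Real.log (α * γ)⌉ 1 ≤ (n : ℤ)) :
    sp ((bellman A hA r p α)^[n] v0 - (bellman A hA r p α)^[n - 1] v0) ≤
      (1 - α) * ε / α :=
  stmt0_general A hA r p hp1 α γ ε hα0 hα1 hγ0 hγ1 hε hγdef v0 hS n hn
end

section
/- Let T_α be the Bellman optimality operator of a finite discounted MDP with α ∈ (0,1), let φ be a deterministic policy and u : Fin m → ℝ a vector such that T_α^φ u = T_α u (φ is greedy with respect to u) and sp(T_α u − u) ≤ (1−α)·ε/α for some ε > 0. If v^φ : Fin m → ℝ satisfies v^φ = T_α^φ v^φ and v* : Fin m → ℝ satisfies v* = T_α v*, then v^φ(x) ≥ v*(x) − ε for every state x; that is, the policy φ returned by the value iteration algorithm with the span stopping rule is ε-optimal. -/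
/-!
Both `T_α` and `T_α^φ` are monotone and shift a constant `k` by only `α k`. For such an operator
`T` with fixed point `v`, a subsolution `w ≤ T w` lies below `v` and a supersolution above it,
which gives MacQueen's bounds `T u + α L / (1 - α) ≤ v ≤ T u + α U / (1 - α)`, where
`L ≤ T u - u ≤ U`. Since `φ` is greedy, `T_α^φ u = T_α u`, so the lower bound for `v^φ` and the
upper bound for `v*` are centred at the same vector and differ by `α (U - L) / (1 - α) ≤ ε`.
-/

open Finset

/-- Operator `T_α^φ` of a deterministic policy `φ`. -/
noncomputable def bellmanPol {m K : ℕ} (r : Fin m → Fin K → ℝ)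
    (p : Fin m → Fin K → Fin m → ℝ) (α : ℝ) (φ : Fin m → Fin K)
    (v : Fin m → ℝ) : Fin m → ℝ :=
  fun x => r x (φ x) + α * ∑ y, p x (φ x) y * v y

def ShiftContracting {ι : Type*} (α : ℝ) (T : (ι → ℝ) → ι → ℝ) : Prop :=
  ∀ v v' : ι → ℝ, ∀ k : ℝ, (∀ y, v y ≤ v' y + k) → ∀ x, T v x ≤ T v' x + α * k

namespace ShiftContracting

variable {ι : Type*} {α : ℝ} {T : (ι → ℝ) → ι → ℝ}

theorem le_of_le_apply_of_apply_le [Finite ι] (hT : ShiftContracting α T) (hα : α < 1)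
    {w v : ι → ℝ} (hw : ∀ x, w x ≤ T w x) (hv : ∀ x, T v x ≤ v x) (x : ι) : w x ≤ v x := by
  have : Nonempty ι := ⟨x⟩
  obtain ⟨z, hz⟩ := Finite.exists_max (fun y => w y - v y)
  have hcontract : w z - v z ≤ α * (w z - v z) := by
    have := hT w v (w z - v z) (fun y => by linarith [hz y]) z
    linarith [hw z, hv z]
  have hmax_nonpos : w z - v z ≤ 0 := by nlinarith
  linarith [hz x]

theorem apply_add_le_of_isFixedPt [Finite ι] (hT : ShiftContracting α T) (hα : α < 1)
    {u v : ι → ℝ} {L : ℝ} (hL : ∀ y, L ≤ T u y - u y) (hv : Function.IsFixedPt T v) (x : ι) :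
    T u x + α * L / (1 - α) ≤ v x := by
  set c := α * L / (1 - α)
  have hc : α * L + α * c = c := by
    simp only [c]
    field_simp [(sub_pos.2 hα).ne']
    ring
  refine hT.le_of_le_apply_of_apply_le hα (w := fun y => T u y + c) (fun y => ?_)
    (fun y => (congrFun hv y).le) x
  have := hT u (fun y => T u y + c) (-L - c) (fun y => by linarith [hL y]) y
  linarith

theorem le_apply_add_of_isFixedPt [Finite ι] (hT : ShiftContracting α T) (hα : α < 1)
    {u v : ι → ℝ} {U : ℝ} (hU : ∀ y, T u y - u y ≤ U) (hv : Function.IsFixedPt T v) (x : ι) :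
    v x ≤ T u x + α * U / (1 - α) := by
  set d := α * U / (1 - α)
  have hd : α * U + α * d = d := by
    simp only [d]
    field_simp [(sub_pos.2 hα).ne']
    ring
  refine hT.le_of_le_apply_of_apply_le hα (v := fun y => T u y + d)
    (fun y => (congrFun hv y).ge) (fun y => ?_) x
  have := hT (fun y => T u y + d) u (U + d) (fun y => by linarith [hU y]) y
  linarith

end ShiftContracting

theorem sum_mul_le_sum_mul_add {ι : Type*} [Fintype ι] {q v v' : ι → ℝ} {k : ℝ}
    (hq0 : ∀ y, 0 ≤ q y) (hq1 : ∑ y, q y = 1) (h : ∀ y, v y ≤ v' y + k) :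
    ∑ y, q y * v y ≤ ∑ y, q y * v' y + k :=
  calc ∑ y, q y * v y ≤ ∑ y, q y * (v' y + k) :=
        sum_le_sum fun y _ => mul_le_mul_of_nonneg_left (h y) (hq0 y)
    _ = ∑ y, q y * v' y + k := by
        simp only [mul_add, sum_add_distrib, ← sum_mul, hq1, one_mul]

section MDP

variable {m K : ℕ} {A : Fin m → Finset (Fin K)} {r : Fin m → Fin K → ℝ}
  {p : Fin m → Fin K → Fin m → ℝ} {α : ℝ}

theorem qValue_le_add (hp0 : ∀ x a y, a ∈ A x → 0 ≤ p x a y)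
    (hp1 : ∀ x a, a ∈ A x → ∑ y, p x a y = 1) (hα : 0 ≤ α) {x : Fin m} {a : Fin K}
    (ha : a ∈ A x) {v v' : Fin m → ℝ} {k : ℝ} (h : ∀ y, v y ≤ v' y + k) :
    r x a + α * ∑ y, p x a y * v y ≤ r x a + α * ∑ y, p x a y * v' y + α * k := by
  have := mul_le_mul_of_nonneg_left
    (sum_mul_le_sum_mul_add (fun y => hp0 x a y ha) (hp1 x a ha) h) hα
  linarith

theorem bellman_shiftContracting (hA : ∀ x, (A x).Nonempty)
    (hp0 : ∀ x a y, a ∈ A x → 0 ≤ p x a y) (hp1 : ∀ x a, a ∈ A x → ∑ y, p x a y = 1)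
    (hα : 0 ≤ α) : ShiftContracting α (bellman A hA r p α) := by
  intro v v' k h x
  refine sup'_le _ _ fun a ha => (qValue_le_add hp0 hp1 hα ha h).trans ?_
  gcongr
  exact le_sup' (fun a => r x a + α * ∑ y, p x a y * v' y) ha

theorem bellmanPol_shiftContracting (hp0 : ∀ x a y, a ∈ A x → 0 ≤ p x a y)
    (hp1 : ∀ x a, a ∈ A x → ∑ y, p x a y = 1) (hα : 0 ≤ α) {φ : Fin m → Fin K}
    (hφ : ∀ x, φ x ∈ A x) : ShiftContracting α (bellmanPol r p α φ) :=
  fun _ _ _ h x => qValue_le_add hp0 hp1 hα (hφ x) h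

end MDP

theorem stmt1_general {m K : ℕ} [NeZero m] (A : Fin m → Finset (Fin K))
    (hA : ∀ x, (A x).Nonempty) (r : Fin m → Fin K → ℝ)
    (p : Fin m → Fin K → Fin m → ℝ)
    (hp0 : ∀ x a y, a ∈ A x → 0 ≤ p x a y)
    (hp1 : ∀ x a, a ∈ A x → ∑ y, p x a y = 1)
    (α ε : ℝ) (hα0 : 0 < α) (hα1 : α < 1)
    (φ : Fin m → Fin K) (hφ : ∀ x, φ x ∈ A x)
    (u : Fin m → ℝ)
    (hgreedy : bellmanPol r p α φ u = bellman A hA r p α u)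
    (hstop : sp (bellman A hA r p α u - u) ≤ (1 - α) * ε / α)
    (vφ : Fin m → ℝ) (hvφ : vφ = bellmanPol r p α φ vφ)
    (vstar : Fin m → ℝ) (hvstar : vstar = bellman A hA r p α vstar) :
    ∀ x, vφ x ≥ vstar x - ε := by
  set Tu := bellman A hA r p α u
  set L := univ.inf' univ_nonempty (Tu - u)
  set U := univ.sup' univ_nonempty (Tu - u)
  have hL : ∀ y, L ≤ bellmanPol r p α φ u y - u y := fun y => hgreedy ▸ inf'_le _ (mem_univ y)
  have hU : ∀ y, Tu y - u y ≤ U := fun y => le_sup' (Tu - u) (mem_univ y)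
  have hspan : α * (U - L) ≤ (1 - α) * ε := by
    rwa [le_div_iff₀ hα0, mul_comm] at hstop
  have hgap : α * U / (1 - α) - α * L / (1 - α) ≤ ε := by
    rw [← sub_div, div_le_iff₀ (by linarith)]
    linarith
  intro x
  have lower := (bellmanPol_shiftContracting hp0 hp1 hα0.le hφ).apply_add_le_of_isFixedPt
    hα1 hL hvφ.symm x
  have upper := (bellman_shiftContracting hA hp0 hp1 hα0.le).le_apply_add_of_isFixedPt
    hα1 hU hvstar.symm x
  rw [hgreedy] at lower
  linarith

theorem stmt1 {m K : ℕ} [NeZero m] (A : Fin m → Finset (Fin K))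
    (hA : ∀ x, (A x).Nonempty) (r : Fin m → Fin K → ℝ)
    (p : Fin m → Fin K → Fin m → ℝ)
    (hp0 : ∀ x a y, a ∈ A x → 0 ≤ p x a y)
    (hp1 : ∀ x a, a ∈ A x → ∑ y, p x a y = 1)
    (α ε : ℝ) (hα0 : 0 < α) (hα1 : α < 1) (hε : 0 < ε)
    (φ : Fin m → Fin K) (hφ : ∀ x, φ x ∈ A x)
    (u : Fin m → ℝ)
    (hgreedy : bellmanPol r p α φ u = bellman A hA r p α u)
    (hstop : sp (bellman A hA r p α u - u) ≤ (1 - α) * ε / α)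
    (vφ : Fin m → ℝ) (hvφ : vφ = bellmanPol r p α φ vφ)
    (vstar : Fin m → ℝ) (hvstar : vstar = bellman A hA r p α vstar) :
    ∀ x, vφ x ≥ vstar x - ε :=
  stmt1_general A hA r p hp0 hp1 α ε hα0 hα1 φ hφ u hgreedy hstop vφ hvφ vstar hvstar
end

section
/- Let T_α be the Bellman optimality operator of a finite discounted MDP and define v¹(x) = max_{a ∈ A x} r x a. Then for every v⁰ : Fin m → ℝ, sp(T_α v⁰) ≤ sp(v¹) + α·sp(v⁰). -/
/-!
Each Bellman update `r x a + α · E_{p(x,a)} v0` lies between `r x a + α · min v0` and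
`r x a + α · max v0`, because an expectation lies between the extreme values. Maximising over
`a` squeezes `T_α v0` between `v¹ + α · min v0` and `v¹ + α · max v0`, and the span of a
function sandwiched between two shifts of `v¹` exceeds `sp v¹` by at most the gap between the
shifts, here `α · sp v0`.
-/

open Finset

namespace Finset

variable {ι : Type*} {s : Finset ι} {w f : ι → ℝ}

theorem sum_mul_le_sup' (hs : s.Nonempty) (hw₀ : ∀ i ∈ s, 0 ≤ w i) (hw₁ : ∑ i ∈ s, w i = 1) :
    ∑ i ∈ s, w i * f i ≤ s.sup' hs f := by
  have h := centerMass_le_sup (f := f) hw₀ (by rw [hw₁]; exact one_pos)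
  rwa [centerMass_eq_of_sum_1 _ _ hw₁] at h

theorem inf'_le_sum_mul (hs : s.Nonempty) (hw₀ : ∀ i ∈ s, 0 ≤ w i) (hw₁ : ∑ i ∈ s, w i = 1) :
    s.inf' hs f ≤ ∑ i ∈ s, w i * f i := by
  have h := inf_le_centerMass (f := f) hw₀ (by rw [hw₁]; exact one_pos)
  rwa [centerMass_eq_of_sum_1 _ _ hw₁] at h

end Finset

theorem sp_le_sp_add_of_le_of_le {m : ℕ} [NeZero m] {f g : Fin m → ℝ} {lo hi : ℝ}
    (hhi : ∀ x, f x ≤ g x + hi) (hlo : ∀ x, g x + lo ≤ f x) : sp f ≤ sp g + (hi - lo) := by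
  have hsup : univ.sup' univ_nonempty f ≤ univ.sup' univ_nonempty g + hi :=
    sup'_le _ _ fun x _ => (hhi x).trans (by gcongr; exact le_sup' g (mem_univ x))
  have hinf : univ.inf' univ_nonempty g + lo ≤ univ.inf' univ_nonempty f :=
    le_inf' _ _ fun x _ => le_trans (by gcongr; exact inf'_le g (mem_univ x)) (hlo x)
  unfold sp
  linarith

section Bellman

variable {m K : ℕ} (A : Fin m → Finset (Fin K)) (hA : ∀ x, (A x).Nonempty)
  (r : Fin m → Fin K → ℝ) (p : Fin m → Fin K → Fin m → ℝ) {α : ℝ} (v : Fin m → ℝ) {c : ℝ}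

theorem bellman_le_sup'_add (hα : 0 ≤ α) (hc : ∀ x a, a ∈ A x → ∑ y, p x a y * v y ≤ c)
    (x : Fin m) : bellman A hA r p α v x ≤ (A x).sup' (hA x) (r x) + α * c :=
  sup'_le _ _ fun a ha => add_le_add (le_sup' (r x) ha) (by gcongr; exact hc x a ha)

theorem sup'_add_le_bellman (hα : 0 ≤ α) (hc : ∀ x a, a ∈ A x → c ≤ ∑ y, p x a y * v y)
    (x : Fin m) : (A x).sup' (hA x) (r x) + α * c ≤ bellman A hA r p α v x := by
  obtain ⟨a, ha, hmax⟩ := exists_mem_eq_sup' (hA x) (r x)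
  rw [hmax]
  exact le_sup'_of_le (fun a => r x a + α * ∑ y, p x a y * v y) ha
    (by gcongr; exact hc x a ha)

end Bellman

theorem stmt4_general {m K : ℕ} [NeZero m] (A : Fin m → Finset (Fin K))
    (hA : ∀ x, (A x).Nonempty) (r : Fin m → Fin K → ℝ)
    (p : Fin m → Fin K → Fin m → ℝ)
    (hp0 : ∀ x a y, a ∈ A x → 0 ≤ p x a y)
    (hp1 : ∀ x a, a ∈ A x → ∑ y, p x a y = 1)
    (α : ℝ) (hα0 : 0 ≤ α)
    (v0 : Fin m → ℝ) :
    sp (bellman A hA r p α v0) ≤ sp (fun x => (A x).sup' (hA x) (r x)) + α * sp v0 := by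
  have hmax : ∀ x a, a ∈ A x → ∑ y, p x a y * v0 y ≤ univ.sup' univ_nonempty v0 :=
    fun x a ha => sum_mul_le_sup' _ (fun y _ => hp0 x a y ha) (hp1 x a ha)
  have hmin : ∀ x a, a ∈ A x → univ.inf' univ_nonempty v0 ≤ ∑ y, p x a y * v0 y :=
    fun x a ha => inf'_le_sum_mul _ (fun y _ => hp0 x a y ha) (hp1 x a ha)
  have h := sp_le_sp_add_of_le_of_le (bellman_le_sup'_add A hA r p v0 hα0 hmax)
    (sup'_add_le_bellman A hA r p v0 hα0 hmin)
  rwa [← mul_sub] at h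

theorem stmt4 {m K : ℕ} [NeZero m] (A : Fin m → Finset (Fin K))
    (hA : ∀ x, (A x).Nonempty) (r : Fin m → Fin K → ℝ)
    (p : Fin m → Fin K → Fin m → ℝ)
    (hp0 : ∀ x a y, a ∈ A x → 0 ≤ p x a y)
    (hp1 : ∀ x a, a ∈ A x → ∑ y, p x a y = 1)
    (α : ℝ) (hα0 : 0 ≤ α) (hα1 : α < 1)
    (v0 : Fin m → ℝ) :
    sp (bellman A hA r p α v0) ≤ sp (fun x => (A x).sup' (hA x) (r x)) + α * sp v0 :=
  stmt4_general A hA r p hp0 hp1 α hα0 v0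
end

section
/- Fix ε > 0, γ ∈ (0,1], and real constants R ≥ 0, V ≥ 0 with R + V > 0, and define f : (0,1) → ℝ by f(α) = log((1−α)·ε·γ / (R + (1+α)·V)) / log(α·γ). Then f is strictly increasing on the set of all α ∈ (0,1) satisfying (1−α)·ε·γ ≤ R + (1+α)·V: for all α₁ < α₂ in (0,1) with (1−α₁)·ε·γ ≤ R + (1+α₁)·V, one has f(α₁) < f(α₂). -/
/-! Write `f(α) = N(α) / D(α)` with `N(α) = log((1-α)εγ / (R+(1+α)V))` and `D(α) = log(αγ)`.
On `(0,1)` the denominator `D` is negative and strictly increasing, while the argument of the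
logarithm in `N` is strictly decreasing, so `N` is strictly decreasing; the hypothesis at `α₁`
makes `N(α₁) ≤ 0`. Dividing a smaller nonpositive numerator by a negative denominator of smaller
absolute value gives a larger quotient. -/

lemma div_lt_div_of_nonpos_of_neg {a₁ a₂ b₁ b₂ : ℝ} (ha : a₂ < a₁) (ha₁ : a₁ ≤ 0)
    (hb : b₁ < b₂) (hb₂ : b₂ < 0) : a₁ / b₁ < a₂ / b₂ := by
  rw [← neg_div_neg_eq a₁, ← neg_div_neg_eq a₂]
  calc -a₁ / -b₁ ≤ -a₂ / -b₁ := by gcongr; linarith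
    _ < -a₂ / -b₂ := div_lt_div_of_pos_left (by linarith) (by linarith) (by linarith)

section Ratio

variable {R V : ℝ} (hR : 0 ≤ R) (hV : 0 ≤ V) (hRV : 0 < R + V)
include hR hV hRV

lemma add_one_add_mul_pos {α : ℝ} (hα : -1 < α) : 0 < R + (1 + α) * V := by
  rcases hV.eq_or_lt with rfl | hV
  · simpa using hRV
  · have : 0 < (1 + α) * V := mul_pos (by linarith) hV
    linarith

lemma strictAntiOn_one_sub_mul_div {c : ℝ} (hc : 0 < c) :
    StrictAntiOn (fun α ↦ (1 - α) * c / (R + (1 + α) * V)) (Set.Ioc (-1) 1) := by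
  rintro α₁ ⟨hα₁, -⟩ α₂ ⟨-, hα₂⟩ h12
  have hD₁ := add_one_add_mul_pos hR hV hRV hα₁
  calc (1 - α₂) * c / (R + (1 + α₂) * V) ≤ (1 - α₂) * c / (R + (1 + α₁) * V) := by gcongr
    _ < (1 - α₁) * c / (R + (1 + α₁) * V) := by gcongr

end Ratio

theorem stmt10 (ε γ R V : ℝ) (hε : 0 < ε) (hγ0 : 0 < γ) (hγ1 : γ ≤ 1)
    (hR : 0 ≤ R) (hV : 0 ≤ V) (hRV : 0 < R + V) :
    ∀ α₁ α₂ : ℝ, 0 < α₁ → α₁ < α₂ → α₂ < 1 →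
      (1 - α₁) * ε * γ ≤ R + (1 + α₁) * V →
      Real.log ((1 - α₁) * ε * γ / (R + (1 + α₁) * V)) / Real.log (α₁ * γ) <
      Real.log ((1 - α₂) * ε * γ / (R + (1 + α₂) * V)) / Real.log (α₂ * γ) := by
  intro α₁ α₂ hα₁ h12 hα₂ hle
  have hD₁ := add_one_add_mul_pos hR hV hRV (show -1 < α₁ by linarith)
  have hD₂ := add_one_add_mul_pos hR hV hRV (show -1 < α₂ by linarith)
  have hratio := strictAntiOn_one_sub_mul_div hR hV hRV (mul_pos hε hγ0)
    ⟨by linarith, by linarith⟩ ⟨by linarith, hα₂.le⟩ h12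
  simp only [mul_assoc] at hratio hle ⊢
  have hN₂ : 0 < (1 - α₂) * (ε * γ) / (R + (1 + α₂) * V) :=
    div_pos (mul_pos (by linarith) (mul_pos hε hγ0)) hD₂
  have hαγ₁ : 0 < α₁ * γ := mul_pos hα₁ hγ0
  have hαγ₂ : α₂ * γ < 1 := by nlinarith
  apply div_lt_div_of_nonpos_of_neg (Real.log_lt_log hN₂ hratio)
  · exact Real.log_nonpos (hN₂.trans hratio).le ((div_le_one hD₁).mpr hle)
  · exact Real.log_lt_log hαγ₁ (by gcongr)
  · exact Real.log_neg (mul_pos (hα₁.trans h12) hγ0) hαγ₂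
end

section
/- For all real numbers α ∈ (0,1), γ ∈ (0,1], ε > 0 and S > 0: max{⌈ log((1−α)·ε·γ/S) / log(α·γ) ⌉, 1} ≤ max{⌈ log((1−α)·ε/S) / log α ⌉, 1}. (The γ-dependent iteration bound is never worse than the bound obtained by replacing γ with 1.) -/
theorem stmt12 (α γ ε S : ℝ) (hα0 : 0 < α) (hα1 : α < 1)
    (hγ0 : 0 < γ) (hγ1 : γ ≤ 1) (hε : 0 < ε) (hS : 0 < S) :
    max ⌈Real.log ((1 - α) * ε * γ / S) / Real.log (α * γ)⌉ 1 ≤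
    max ⌈Real.log ((1 - α) * ε / S) / Real.log α⌉ 1 := by
  set a := Real.log α with ha
  set g := Real.log γ with hg
  set c := Real.log ((1 - α) * ε / S) with hc
  have hαpos : (0:ℝ) < 1 - α := by linarith
  have ha0 : a < 0 := Real.log_neg hα0 hα1
  have hg0 : g ≤ 0 := Real.log_nonpos hγ0.le hγ1
  have hag : a + g < 0 := by linarith
  have h1 : Real.log (α * γ) = a + g := Real.log_mul hα0.ne' hγ0.ne'
  have h2 : Real.log ((1 - α) * ε * γ / S) = c + g := by
    have : (1 - α) * ε * γ / S = ((1 - α) * ε / S) * γ := by ring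
    rw [this, Real.log_mul (by positivity) hγ0.ne']
  rw [h1, h2]
  -- key real inequality
  have key : (c + g) / (a + g) ≤ max (c / a) 1 := by
    rcases le_or_gt 0 (c + g) with hcg | hcg
    · have : (c + g) / (a + g) ≤ 0 :=
        div_nonpos_of_nonneg_of_nonpos hcg hag.le
      exact this.trans (by norm_num)
    · rcases le_or_gt a c with hca | hca
      · refine le_trans ?_ (le_max_right _ _)
        rw [div_le_iff_of_neg hag]
        linarith
      · refine le_trans ?_ (le_max_left _ _)
        rw [div_le_iff_of_neg hag, div_mul_eq_mul_div, div_le_iff_of_neg ha0]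
        nlinarith [mul_nonneg (neg_nonneg.mpr hg0) (sub_pos.mpr hca).le]
  rcases max_cases (c / a) 1 with ⟨heq, _⟩ | ⟨heq, _⟩ <;> rw [heq] at key
  · exact max_le ((Int.ceil_le_ceil key).trans (le_max_left _ _)) (le_max_right _ _)
  · have : ⌈(c + g) / (a + g)⌉ ≤ 1 := by
      simpa using Int.ceil_le_ceil (R := ℝ) key
    exact max_le (this.trans (le_max_right _ _)) (le_max_right _ _)
end

section
/- Let α ∈ [0,1) and define T : (Fin 3 → ℝ) → (Fin 3 → ℝ) by (T v) 0 = α·max(v 1, v 2), (T v) 1 = 1 + α·(v 1), (T v) 2 = −1 + α·(v 2), and let v⁰ : Fin 3 → ℝ be given by v⁰ 0 = 1, v⁰ 1 = 2, v⁰ 2 = −2. Then for every n ∈ ℕ: (Tⁿ v⁰) 0 = αⁿ + ∑_{k=1}^{n} α^k, (Tⁿ v⁰) 1 = αⁿ + ∑_{k=0}^{n} α^k, and (Tⁿ v⁰) 2 = −αⁿ − ∑_{k=0}^{n} α^k. -/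
/-- Bellman optimality operator of the 3-state MDP of Example 1. -/
noncomputable def Tex1 (α : ℝ) (v : Fin 3 → ℝ) : Fin 3 → ℝ :=
  ![α * max (v 1) (v 2), 1 + α * v 1, -1 + α * v 2]

/-! Along value iteration from `v⁰ = (1, 2, -2)` the value of state 1 stays nonnegative and that of
state 2 is its negative, so the maximum at state 0 always picks state 1 and each component obeys a
linear recursion solved by geometric sums. -/

lemma sum_Icc_one_pow_eq_mul_geom_sum (α : ℝ) (n : ℕ) :
    ∑ k ∈ Finset.Icc 1 n, α ^ k = α * ∑ k ∈ Finset.range n, α ^ k := by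
  rw [← Finset.Ico_add_one_right_eq_Icc, Finset.sum_Ico_eq_sum_range, Finset.mul_sum]
  simp only [add_tsub_cancel_right, add_comm 1, pow_succ']

noncomputable def valueIterateEx1 (α : ℝ) (n : ℕ) : Fin 3 → ℝ :=
  ![α ^ n + α * ∑ k ∈ Finset.range n, α ^ k,
    α ^ n + ∑ k ∈ Finset.range (n + 1), α ^ k,
    -α ^ n - ∑ k ∈ Finset.range (n + 1), α ^ k]

lemma Tex1_valueIterateEx1 {α : ℝ} (hα : 0 ≤ α) (n : ℕ) :
    Tex1 α (valueIterateEx1 α n) = valueIterateEx1 α (n + 1) := by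
  have hS : 0 ≤ α ^ n + ∑ k ∈ Finset.range (n + 1), α ^ k := by positivity
  have hmax : max (α ^ n + ∑ k ∈ Finset.range (n + 1), α ^ k)
      (-α ^ n - ∑ k ∈ Finset.range (n + 1), α ^ k) = α ^ n + ∑ k ∈ Finset.range (n + 1), α ^ k :=
    max_eq_left (by linarith)
  ext i
  fin_cases i <;>
    simp only [Tex1, valueIterateEx1, Fin.zero_eta, Fin.mk_one, Fin.reduceFinMk,
      Matrix.cons_val, hmax, geom_sum_succ (n := n + 1), pow_succ] <;> ring

lemma iterate_Tex1_ex1 {α : ℝ} (hα : 0 ≤ α) (n : ℕ) :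
    (Tex1 α)^[n] ![(1 : ℝ), 2, -2] = valueIterateEx1 α n := by
  induction n with
  | zero => ext i; fin_cases i <;> norm_num [valueIterateEx1]
  | succ n ih => rw [Function.iterate_succ_apply', ih, Tex1_valueIterateEx1 hα]

theorem stmt15_general (α : ℝ) (hα0 : 0 ≤ α) (n : ℕ) :
    ((Tex1 α)^[n] ![(1 : ℝ), 2, -2]) 0 = α ^ n + ∑ k ∈ Finset.Icc 1 n, α ^ k ∧
    ((Tex1 α)^[n] ![(1 : ℝ), 2, -2]) 1 = α ^ n + ∑ k ∈ Finset.range (n + 1), α ^ k ∧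
    ((Tex1 α)^[n] ![(1 : ℝ), 2, -2]) 2 = -α ^ n - ∑ k ∈ Finset.range (n + 1), α ^ k := by
  rw [iterate_Tex1_ex1 hα0, sum_Icc_one_pow_eq_mul_geom_sum]
  exact ⟨rfl, rfl, rfl⟩

theorem stmt15 (α : ℝ) (hα0 : 0 ≤ α) (hα1 : α < 1) (n : ℕ) :
    ((Tex1 α)^[n] ![(1 : ℝ), 2, -2]) 0 = α ^ n + ∑ k ∈ Finset.Icc 1 n, α ^ k ∧
    ((Tex1 α)^[n] ![(1 : ℝ), 2, -2]) 1 = α ^ n + ∑ k ∈ Finset.range (n + 1), α ^ k ∧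
    ((Tex1 α)^[n] ![(1 : ℝ), 2, -2]) 2 = -α ^ n - ∑ k ∈ Finset.range (n + 1), α ^ k :=
  stmt15_general α hα0 n
end

section
/- Let α ∈ [0,1) and define T : (Fin 3 → ℝ) → (Fin 3 → ℝ) by (T v) 0 = α·max(v 1, v 2), (T v) 1 = 1 + α·(v 1), (T v) 2 = −1 + α·(v 2), and let v⁰ : Fin 3 → ℝ be given by v⁰ 0 = 1, v⁰ 1 = 2, v⁰ 2 = −2. Then for every n ≥ 1, sp(Tⁿ v⁰ − T^{n−1} v⁰) = 2·α^{n−1}·|2α − 1| = α^{n−1}·sp(T v⁰ − v⁰). (Hence the span contraction estimate sp(v_{n,α} − v_{n−1,α}) ≤ (αγ)^{n−1} sp(v_{1,α} − v⁰) holds with equality for this MDP, for which γ = 1.) -/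
/-!
On the set of vectors with `v 1 ≥ 0` and `v 2 = -v 1`, which contains `v⁰` and is preserved
by `T`, the maximum in `T` always picks `v 1`, so there `T v - T w = α (v 1 - w 1) • (1, 1, -1)`.
Starting from `T v⁰ - v⁰ = (2α - 1) • (1, 1, -1)`, the consecutive differences are therefore
`α ^ n (2α - 1) • (1, 1, -1)`, whose span is `2 α ^ n |2α - 1|`.
-/

open Finset

theorem sp_vec3 (a b c : ℝ) : sp ![a, b, c] = max a (max b c) - min a (min b c) := by
  simp [sp, Fin.univ_succ]

theorem sp_smul_one_one_neg_one (c : ℝ) : sp (c • ![1, 1, -1]) = 2 * |c| := by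
  rw [Matrix.smul_cons, Matrix.smul_cons, Matrix.smul_cons, Matrix.smul_empty, sp_vec3]
  simp only [smul_eq_mul, mul_one, mul_neg, ← max_assoc, max_self, ← min_assoc, min_self]
  rcases le_total 0 c with hc | hc
  · rw [max_eq_left (by linarith), min_eq_right (by linarith), abs_of_nonneg hc]; ring
  · rw [max_eq_right (by linarith), min_eq_left (by linarith), abs_of_nonpos hc]; ring

def nonnegAntipodal : Set (Fin 3 → ℝ) := {v | 0 ≤ v 1 ∧ v 2 = -v 1}

theorem mapsTo_Tex1 {α : ℝ} (hα : 0 ≤ α) :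
    Set.MapsTo (Tex1 α) nonnegAntipodal nonnegAntipodal := by
  rintro v ⟨hv, hv2⟩
  simp only [nonnegAntipodal, Tex1, Set.mem_ofPred_eq, Matrix.cons_val, hv2]
  exact ⟨by positivity, by ring⟩

theorem Tex1_sub_Tex1 (α : ℝ) {v w : Fin 3 → ℝ} (hv : v ∈ nonnegAntipodal)
    (hw : w ∈ nonnegAntipodal) :
    Tex1 α v - Tex1 α w = (α * (v 1 - w 1)) • ![1, 1, -1] := by
  obtain ⟨hv1, hv2⟩ := hv
  obtain ⟨hw1, hw2⟩ := hw
  have hvmax : max (v 1) (-v 1) = v 1 := max_eq_left (by linarith)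
  have hwmax : max (w 1) (-w 1) = w 1 := max_eq_left (by linarith)
  ext i
  fin_cases i <;> simp [Tex1, hvmax, hwmax, hv2, hw2] <;> ring

theorem iterate_Tex1_sub_iterate {α : ℝ} (hα : 0 ≤ α) {v w : Fin 3 → ℝ}
    (hv : v ∈ nonnegAntipodal) (hw : w ∈ nonnegAntipodal) {c : ℝ}
    (hvw : v - w = c • ![1, 1, -1]) (n : ℕ) :
    (Tex1 α)^[n] v - (Tex1 α)^[n] w = (α ^ n * c) • ![1, 1, -1] := by
  induction n with
  | zero => simpa using hvw
  | succ n ih =>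
    have hc : (Tex1 α)^[n] v 1 - (Tex1 α)^[n] w 1 = α ^ n * c := by
      simpa using congrFun ih 1
    rw [Function.iterate_succ_apply', Function.iterate_succ_apply',
      Tex1_sub_Tex1 α ((mapsTo_Tex1 hα).iterate n hv) ((mapsTo_Tex1 hα).iterate n hw), hc,
      pow_succ', mul_assoc]

theorem Tex1_v0_sub_v0 (α : ℝ) :
    Tex1 α ![(1 : ℝ), 2, -2] - ![(1 : ℝ), 2, -2] = (2 * α - 1) • ![1, 1, -1] := by
  ext i
  fin_cases i <;> simp [Tex1] <;> ring

theorem stmt16_general (α : ℝ) (hα0 : 0 ≤ α) (n : ℕ) (hn : 1 ≤ n) :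
    sp ((Tex1 α)^[n] ![(1 : ℝ), 2, -2] - (Tex1 α)^[n - 1] ![(1 : ℝ), 2, -2]) =
      2 * α ^ (n - 1) * |2 * α - 1| ∧
    2 * α ^ (n - 1) * |2 * α - 1| =
      α ^ (n - 1) * sp (Tex1 α ![(1 : ℝ), 2, -2] - ![(1 : ℝ), 2, -2]) := by
  obtain ⟨m, rfl⟩ := Nat.exists_eq_add_of_le' hn
  have hv0 : ![(1 : ℝ), 2, -2] ∈ nonnegAntipodal := by simp [nonnegAntipodal]
  have hdiff := iterate_Tex1_sub_iterate hα0 (mapsTo_Tex1 hα0 hv0) hv0 (Tex1_v0_sub_v0 α) m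
  rw [← Function.iterate_succ_apply] at hdiff
  rw [Nat.add_sub_cancel, hdiff, Tex1_v0_sub_v0, sp_smul_one_one_neg_one, sp_smul_one_one_neg_one,
    abs_mul, abs_of_nonneg (pow_nonneg hα0 m)]
  constructor <;> ring

theorem stmt16 (α : ℝ) (hα0 : 0 ≤ α) (hα1 : α < 1) (n : ℕ) (hn : 1 ≤ n) :
    sp ((Tex1 α)^[n] ![(1 : ℝ), 2, -2] - (Tex1 α)^[n - 1] ![(1 : ℝ), 2, -2]) =
      2 * α ^ (n - 1) * |2 * α - 1| ∧
    2 * α ^ (n - 1) * |2 * α - 1| =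
      α ^ (n - 1) * sp (Tex1 α ![(1 : ℝ), 2, -2] - ![(1 : ℝ), 2, -2]) :=
  stmt16_general α hα0 n hn
end

section
/- For n ≥ 3 let δ_n denote the unique real number in (0, 1/2) such that ∑_{i=0}^{n−1} (1/2 + δ_n)^i = 2. Then the sequence (δ_n) is strictly decreasing (δ_{n+1} < δ_n for all n ≥ 3) and δ_n tends to 0 as n tends to infinity. -/
/-! Writing `x = 1/2 + δ_n`, the identity `(∑_{i<n} x^i)(x - 1) = x^n - 1` turns the defining
equation into `δ_n = x^n / 2`. Adding a term to a geometric sum with positive ratio increases it,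
so the ratio solving `∑_{i<n+1} x^i = 2` is smaller: `δ_{n+1} < δ_n`. Hence
`0 < δ_n ≤ (1/2 + δ_3)^n / 2`, a geometric sequence with ratio `< 1`. -/

open Filter Finset

theorem lt_of_geom_sum_succ_eq_geom_sum {x y : ℝ} {n : ℕ} (hx : 0 < x)
    (h : ∑ i ∈ range (n + 1), y ^ i = ∑ i ∈ range n, x ^ i) : y < x := by
  by_contra! hxy
  have hle : ∑ i ∈ range (n + 1), x ^ i ≤ ∑ i ∈ range (n + 1), y ^ i :=
    sum_le_sum fun i _ ↦ pow_le_pow_left₀ hx.le hxy i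
  rw [sum_range_succ, h] at hle
  linarith [pow_pos hx n]

theorem pow_eq_two_mul_sub_one_of_geom_sum_eq_two {x : ℝ} {n : ℕ}
    (h : ∑ i ∈ range n, x ^ i = 2) : x ^ n = 2 * x - 1 := by
  have := geom_sum_mul x n
  rw [h] at this
  linarith

theorem stmt18 (δ : ℕ → ℝ)
    (hδ : ∀ n : ℕ, 3 ≤ n → δ n ∈ Set.Ioo (0 : ℝ) (1 / 2) ∧
      ∑ i ∈ Finset.range n, (1 / 2 + δ n) ^ i = 2) :
    (∀ n : ℕ, 3 ≤ n → δ (n + 1) < δ n) ∧ Tendsto δ atTop (nhds 0) := by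
  have hdec : ∀ n : ℕ, 3 ≤ n → δ (n + 1) < δ n := fun n hn ↦ by
    have := lt_of_geom_sum_succ_eq_geom_sum (by linarith [(hδ n hn).1.1])
      ((hδ (n + 1) (by omega)).2.trans (hδ n hn).2.symm)
    linarith
  have hanti : AntitoneOn δ (Set.Ici 3) :=
    antitoneOn_of_add_one_le Set.ordConnected_Ici fun n _ hn _ ↦ (hdec n hn).le
  have hδ_eq : ∀ n, 3 ≤ n → δ n = (1 / 2 + δ n) ^ n / 2 := fun n hn ↦ by
    rw [pow_eq_two_mul_sub_one_of_geom_sum_eq_two (hδ n hn).2]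
    ring
  obtain ⟨⟨hδ₃_pos, hδ₃_lt⟩, -⟩ := hδ 3 le_rfl
  have hgeom : Tendsto (fun n : ℕ ↦ (1 / 2 + δ 3) ^ n / 2) atTop (nhds 0) := by
    simpa using (tendsto_pow_atTop_nhds_zero_of_lt_one (r := 1 / 2 + δ 3) (by linarith)
      (by linarith)).div_const 2
  refine ⟨hdec, squeeze_zero' ?_ ?_ hgeom⟩
  · filter_upwards [eventually_ge_atTop 3] with n hn
    exact (hδ n hn).1.1.le
  · filter_upwards [eventually_ge_atTop 3] with n hn
    rw [hδ_eq n hn]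
    gcongr
    · linarith [(hδ n hn).1.1]
    · exact hanti (Set.mem_Ici.2 le_rfl) hn hn
end
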